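/- arXiv:1304.4692 — 3 statements merged into one kernel-verified Lean document; each statement's English description precedes it below -/
import Mathlib

section
/- Let A be a commutative ring, R a commutative A-algebra that is flat as an A-module, and B a commutative A-algebra. Then the natural map Δ_{R/A} ⊗_A B → Δ_{(R⊗_A B)/B} is an isomorphism, where Δ denotes the kernel of the multiplication map on the tensor square. -/
/-!
The multiplication map `μ : R ⊗[A] R → R` has the `A`-linear section `r ↦ r ⊗ 1`, so
`0 → Δ_{R/A} → R ⊗[A] R → R → 0` is split exact and stays exact after applying `- ⊗[A] B`.
Under the algebra isomorphism `(R ⊗[A] R) ⊗[A] B ≃ (R ⊗[A] B) ⊗[B] (R ⊗[A] B)`,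
`(r ⊗ s) ⊗ b ↦ (r ⊗ b) ⊗ (s ⊗ 1)`, the map `μ ⊗ B` becomes the multiplication of `R ⊗[A] B`
over `B`, so `Δ_{R/A} ⊗[A] B` is carried isomorphically onto `Δ_{(R ⊗[A] B)/B}`.
-/

open TensorProduct

attribute [local instance] Algebra.TensorProduct.rightAlgebra

namespace LinearMap

variable {R M P Q : Type*} [CommRing R] [AddCommGroup M] [AddCommGroup P] [AddCommGroup Q]
  [Module R M] [Module R P] [Module R Q]

theorem rTensor_ker_subtype_injective_of_comp_eq_id {g : P →ₗ[R] Q} {s : Q →ₗ[R] P}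
    (hgs : g ∘ₗ s = id) : Function.Injective ((ker g).subtype.rTensor M) := by
  let retraction : P →ₗ[R] ker g :=
    (id - s ∘ₗ g).codRestrict (ker g) fun p => by simp [← comp_apply g s, hgs]
  have hretraction : retraction ∘ₗ (ker g).subtype = id := by
    ext ⟨p, hp⟩
    simp [retraction, mem_ker.1 hp]
  refine Function.LeftInverse.injective (g := retraction.rTensor M) fun x => ?_
  rw [← comp_apply, ← rTensor_comp, hretraction, rTensor_id, id_apply]

end LinearMap

namespace Algebra.TensorProduct

variable {A R B : Type*} [CommRing A] [CommRing R] [Algebra A R] [CommRing B] [Algebra A B]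

theorem algHom_ext_rightAlgebra {C : Type*} [Semiring C] [Algebra B C]
    {f g : R ⊗[A] B →ₐ[B] C} (h : ∀ r : R, f (r ⊗ₜ 1) = g (r ⊗ₜ 1)) : f = g := by
  ext x
  induction x using TensorProduct.induction_on with
  | zero => simp
  | add x y hx hy => simp only [map_add, hx, hy]
  | tmul r b =>
    have : r ⊗ₜ[A] b = (r ⊗ₜ 1) * algebraMap B (R ⊗[A] B) b := by
      simp [RingHom.algebraMap_toAlgebra]
    rw [this, map_mul, map_mul, h, AlgHom.commutes, AlgHom.commutes]

variable (A R B)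

noncomputable def tensorSelfToBaseChange : R ⊗[A] R →ₐ[A] (R ⊗[A] B) ⊗[B] (R ⊗[A] B) :=
  productMap ((includeLeft (R := B) (S := B)).restrictScalars A |>.comp includeLeft)
    ((includeRight (R := B)).restrictScalars A |>.comp includeLeft)

@[simp]
theorem tensorSelfToBaseChange_tmul (r s : R) :
    tensorSelfToBaseChange A R B (r ⊗ₜ s) = (r ⊗ₜ 1) ⊗ₜ (s ⊗ₜ 1) := by
  simp [tensorSelfToBaseChange]

noncomputable def tensorSelfBaseChangeHom :
    (R ⊗[A] R) ⊗[A] B →ₐ[B] (R ⊗[A] B) ⊗[B] (R ⊗[A] B) :=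
  { productMap (tensorSelfToBaseChange A R B) (IsScalarTower.toAlgHom A B _) with
    commutes' := fun b => by simp [RingHom.algebraMap_toAlgebra] }

@[simp]
theorem tensorSelfBaseChangeHom_tmul (r s : R) (b : B) :
    tensorSelfBaseChangeHom A R B ((r ⊗ₜ s) ⊗ₜ b) = (r ⊗ₜ b) ⊗ₜ (s ⊗ₜ 1) := by
  simp [tensorSelfBaseChangeHom, RingHom.algebraMap_toAlgebra]

noncomputable def baseChangeToTensorSelf :
    (R ⊗[A] B) ⊗[B] (R ⊗[A] B) →ₐ[B] (R ⊗[A] R) ⊗[A] B :=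
  productMap
    { map (includeLeft : R →ₐ[A] R ⊗[A] R) (AlgHom.id A B) with
      commutes' := fun b => by simp [RingHom.algebraMap_toAlgebra, one_def] }
    { map (includeRight : R →ₐ[A] R ⊗[A] R) (AlgHom.id A B) with
      commutes' := fun b => by simp [RingHom.algebraMap_toAlgebra, one_def] }

@[simp]
theorem baseChangeToTensorSelf_tmul (r s : R) (b c : B) :
    baseChangeToTensorSelf A R B ((r ⊗ₜ b) ⊗ₜ (s ⊗ₜ c)) = (r ⊗ₜ s) ⊗ₜ (b * c) := by
  simp [baseChangeToTensorSelf]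

noncomputable def tensorSelfBaseChangeEquiv :
    (R ⊗[A] R) ⊗[A] B ≃ₐ[B] (R ⊗[A] B) ⊗[B] (R ⊗[A] B) :=
  AlgEquiv.ofAlgHom (tensorSelfBaseChangeHom A R B) (baseChangeToTensorSelf A R B)
    (by apply Algebra.TensorProduct.ext <;> refine algHom_ext_rightAlgebra fun r => ?_ <;>
          simp [one_def])
    (algHom_ext_rightAlgebra fun x => by
      induction x using TensorProduct.induction_on with
      | zero => simp
      | add x y hx hy => simp_all [add_tmul]
      | tmul r s => simp)

theorem tensorSelfBaseChangeEquiv_tmul (x : R ⊗[A] R) (b : B) :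
    tensorSelfBaseChangeEquiv A R B (x ⊗ₜ b) = algebraMap B _ b * tensorSelfToBaseChange A R B x :=
  mul_comm _ _

theorem lmul'_tensorSelfBaseChangeEquiv (x : (R ⊗[A] R) ⊗[A] B) :
    lmul' B (tensorSelfBaseChangeEquiv A R B x) = (lmul' A).toLinearMap.rTensor B x := by
  suffices h : ((lmul' B).toLinearMap.restrictScalars A) ∘ₗ
      ((tensorSelfBaseChangeEquiv A R B).toAlgHom.restrictScalars A).toLinearMap =
      (lmul' A (S := R)).toLinearMap.rTensor B from
    LinearMap.congr_fun h x
  ext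
  simp [tensorSelfBaseChangeEquiv]

end Algebra.TensorProduct

open Algebra.TensorProduct

theorem delta_base_change_general {A R B : Type*} [CommRing A] [CommRing R] [Algebra A R]
    [CommRing B] [Algebra A B] :
    ∃ ψ : (R ⊗[A] R) →+* ((R ⊗[A] B) ⊗[B] (R ⊗[A] B)),
      (∀ r s : R, ψ (r ⊗ₜ[A] s) = (r ⊗ₜ[A] (1 : B)) ⊗ₜ[B] (s ⊗ₜ[A] (1 : B))) ∧
      ∃ φ : (↥((RingHom.ker (Algebra.TensorProduct.lmul' A (S := R))).restrictScalars A)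
              ⊗[A] B) →ₗ[A] ((R ⊗[A] B) ⊗[B] (R ⊗[A] B)),
        (∀ (x : ↥((RingHom.ker (Algebra.TensorProduct.lmul' A (S := R))).restrictScalars A))
            (b : B), φ (x ⊗ₜ[A] b) = algebraMap B _ b * ψ (x : R ⊗[A] R)) ∧
        Function.Injective φ ∧
        (Set.range φ =
          ↑(RingHom.ker (Algebra.TensorProduct.lmul' B (S := R ⊗[A] B)))) := by
  set μ : R ⊗[A] R →ₗ[A] R := (lmul' A).toLinearMap
  have hker : (RingHom.ker (lmul' A (S := R))).restrictScalars A = LinearMap.ker μ := rfl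
  have hsection : μ ∘ₗ (includeLeft : R →ₐ[A] R ⊗[A] R).toLinearMap = LinearMap.id := by
    ext; simp [μ]
  have hexact : Function.Exact ((LinearMap.ker μ).subtype.rTensor B) (μ.rTensor B) :=
    rTensor_exact B (LinearMap.exact_subtype_ker_map μ)
      fun r => ⟨_, LinearMap.congr_fun hsection r⟩
  rw [hker]
  refine ⟨tensorSelfToBaseChange A R B, tensorSelfToBaseChange_tmul A R B,
    ((tensorSelfBaseChangeEquiv A R B).toAlgHom.restrictScalars A).toLinearMap ∘ₗ
      (LinearMap.ker μ).subtype.rTensor B,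
    fun x b => tensorSelfBaseChangeEquiv_tmul A R B x b,
    (tensorSelfBaseChangeEquiv A R B).injective.comp <|
      LinearMap.rTensor_ker_subtype_injective_of_comp_eq_id hsection, ?_⟩
  ext y
  obtain ⟨x, rfl⟩ := (tensorSelfBaseChangeEquiv A R B).surjective y
  rw [LinearMap.coe_comp, Set.range_comp]
  simp [(tensorSelfBaseChangeEquiv A R B).injective.mem_set_image, ← hexact x,
    lmul'_tensorSelfBaseChangeEquiv, μ]

/-- Let `A` be a commutative ring, `R` a flat commutative `A`-algebra and `B` a commutative
`A`-algebra.  Writing `Δ_{R/A} = ker(R ⊗[A] R → R)` and `Δ_{R_B/B} = ker(R_B ⊗[B] R_B → R_B)`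
where `R_B = R ⊗[A] B`, the natural map `Δ_{R/A} ⊗[A] B → Δ_{R_B/B}` (induced by the
canonical ring map `ψ : R ⊗[A] R → R_B ⊗[B] R_B`, `r ⊗ s ↦ (r ⊗ 1) ⊗ (s ⊗ 1)`) is an
isomorphism: it is injective with image exactly `Δ_{R_B/B}`. -/
theorem delta_base_change {A R B : Type*} [CommRing A] [CommRing R] [Algebra A R]
    [CommRing B] [Algebra A B] [Module.Flat A R] :
    ∃ ψ : (R ⊗[A] R) →+* ((R ⊗[A] B) ⊗[B] (R ⊗[A] B)),
      (∀ r s : R, ψ (r ⊗ₜ[A] s) = (r ⊗ₜ[A] (1 : B)) ⊗ₜ[B] (s ⊗ₜ[A] (1 : B))) ∧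
      ∃ φ : (↥((RingHom.ker (Algebra.TensorProduct.lmul' A (S := R))).restrictScalars A)
              ⊗[A] B) →ₗ[A] ((R ⊗[A] B) ⊗[B] (R ⊗[A] B)),
        (∀ (x : ↥((RingHom.ker (Algebra.TensorProduct.lmul' A (S := R))).restrictScalars A))
            (b : B), φ (x ⊗ₜ[A] b) = algebraMap B _ b * ψ (x : R ⊗[A] R)) ∧
        Function.Injective φ ∧
        (Set.range φ =
          ↑(RingHom.ker (Algebra.TensorProduct.lmul' B (S := R ⊗[A] B)))) :=
  delta_base_change_general
end

section
/- Let A → R be a homomorphism of commutative Noetherian rings and M an R-module. If P is an associated prime of M as an R-module, then the contraction P ∩ A (i.e., the preimage of P under A → R) is an associated prime of M as an A-module. -/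
theorem Submodule.comap_colon_bot_singleton {A R : Type*} [CommRing A] [CommRing R]
    (f : A →+* R) {M : Type*} [AddCommGroup M] [Module R M] [Module A M]
    (hcompat : ∀ (a : A) (x : M), a • x = f a • x) (x : M) :
    ((⊥ : Submodule R M).colon {x}).comap f = (⊥ : Submodule A M).colon {x} := by
  ext a
  simp only [Ideal.mem_comap, Submodule.mem_colon_singleton, Submodule.mem_bot, hcompat]

theorem comap_associatedPrime_general {A R : Type*} [CommRing A]
    [CommRing R] (f : A →+* R)
    (M : Type*) [AddCommGroup M] [Module R M] [Module A M]
    (hcompat : ∀ (a : A) (x : M), a • x = f a • x)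
    (P : Ideal R) (hP : P ∈ associatedPrimes R M) :
    P.comap f ∈ associatedPrimes A M := by
  obtain ⟨hprime, x, rfl⟩ := hP
  refine ⟨Ideal.comap_isPrime (H := hprime) f _, x, ?_⟩
  rw [Ideal.comap_radical, Submodule.comap_colon_bot_singleton f hcompat]

/-- Let `A → R` be a homomorphism of commutative Noetherian rings and `M` an `R`-module,
viewed also as an `A`-module by restriction of scalars.  If `P` is an associated prime of
`M` over `R`, then its contraction `P ∩ A` is an associated prime of `M` over `A`. -/
theorem comap_associatedPrime {A R : Type*} [CommRing A] [IsNoetherianRing A]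
    [CommRing R] [IsNoetherianRing R] (f : A →+* R)
    (M : Type*) [AddCommGroup M] [Module R M] [Module A M]
    (hcompat : ∀ (a : A) (x : M), a • x = f a • x)
    (P : Ideal R) (hP : P ∈ associatedPrimes R M) :
    P.comap f ∈ associatedPrimes A M :=
  comap_associatedPrime_general f M hcompat P hP
end

section
/- Let R be a commutative ring, I an ideal of R, M an R-module, and δ : M → M an additive map that is a differential operator of order at most n relative to R (meaning: for order 0, δ is R-linear, and inductively δ has order ≤ n if [r̃, δ] = r̃∘δ − δ∘r̃ has order ≤ n−1 for every r ∈ R, where r̃ is multiplication by r on M). If x ∈ M satisfies I^k x = 0, then I^{k+n} δ(x) = 0. In particular, differential operators on M preserve the I-power-torsion submodule Γ_I(M). -/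
/-- Differential operators of order at most `n` on an `R`-module `M`, defined inductively:
order `≤ 0` means `R`-linear, and `δ` has order `≤ n + 1` if the commutator
`[r̃, δ] = r̃ ∘ δ - δ ∘ r̃` has order `≤ n` for every `r : R`, where `r̃` is the
scalar-multiplication-by-`r` map on `M`. -/
def IsDiffOpLE (R : Type*) [CommRing R] {M : Type*} [AddCommGroup M] [Module R M] :
    ℕ → AddMonoid.End M → Prop
  | 0, δ => ∀ (r : R) (x : M), δ (r • x) = r • δ x
  | n + 1, δ => ∀ r : R,
      IsDiffOpLE R n ((DistribMulAction.toAddMonoidEnd R M r) * δ -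
        δ * (DistribMulAction.toAddMonoidEnd R M r))

lemma diffOp_key {R : Type*} [CommRing R] (I : Ideal R)
    {M : Type*} [AddCommGroup M] [Module R M] :
    ∀ (n : ℕ) (δ : AddMonoid.End M), IsDiffOpLE R n δ →
      ∀ (k : ℕ) (x : M), (∀ r ∈ I ^ k, r • x = 0) → ∀ r ∈ I ^ (k + n), r • δ x = 0 := by
  intro n
  induction n with
  | zero =>
    intro δ hδ k x hx r hr
    rw [Nat.add_zero] at hr
    rw [← hδ r x, hx r hr, map_zero]
  | succ n ih =>
    intro δ hδ k
    induction k with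
    | zero =>
      intro x hx r hr
      have hx0 : x = 0 := by
        have := hx 1 (by simp)
        simpa using this
      subst hx0
      simp
    | succ k ihk =>
      intro x hx r hr
      have hr' : r ∈ I ^ (k + n + 1) * I := by
        rw [← pow_succ]
        convert hr using 2
        ring
      refine Submodule.mul_induction_on hr' ?_ ?_
      · intro b hb a ha
        set D : AddMonoid.End M := DistribMulAction.toAddMonoidEnd R M a * δ -
          δ * (DistribMulAction.toAddMonoidEnd R M a) with hDdef
        have h1 : b • D x = 0 := ih D (hδ a) (k + 1) x hx b (by
          convert hb using 2; ring)
        have hax : ∀ s ∈ I ^ k, s • (a • x) = 0 := by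
          intro s hs
          rw [smul_smul]
          exact hx (s * a) (by rw [pow_succ]; exact Ideal.mul_mem_mul hs ha)
        have h2 : b • δ (a • x) = 0 := ihk (a • x) hax b hb
        have hDx : D x = a • δ x - δ (a • x) := rfl
        have ha' : a • δ x = D x + δ (a • x) := by rw [hDx]; abel
        rw [mul_smul, ha', smul_add, h1, h2, add_zero]
      · intro r1 r2 h1 h2
        rw [add_smul, h1, h2, add_zero]

/-- If `δ : M → M` is a differential operator of order at most `n` relative to `R`, and
`x ∈ M` satisfies `I^k x = 0`, then `I^{k+n} δ(x) = 0`.  In particular, differential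
operators on `M` preserve the `I`-power-torsion submodule `Γ_I(M)`. -/
theorem diffOp_preserves_torsion {R : Type*} [CommRing R] (I : Ideal R)
    {M : Type*} [AddCommGroup M] [Module R M] (n : ℕ) (δ : AddMonoid.End M)
    (hδ : IsDiffOpLE R n δ) :
    (∀ (x : M) (k : ℕ), (∀ r ∈ I ^ k, r • x = 0) →
      ∀ r ∈ I ^ (k + n), r • δ x = 0) ∧
    (∀ x : M, (∃ k : ℕ, ∀ r ∈ I ^ k, r • x = 0) →
      ∃ m : ℕ, ∀ r ∈ I ^ m, r • δ x = 0) := by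
  constructor
  · intro x k hx
    exact diffOp_key I n δ hδ k x hx
  · rintro x ⟨k, hk⟩
    exact ⟨k + n, diffOp_key I n δ hδ k x hk⟩
end
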